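/- arXiv:2504.20641 — 4 statements merged into one kernel-verified Lean document; each statement's English description precedes it below -/
import Mathlib

section
/- Let A be a unital Banach algebra and δ : A → A a bounded derivation, i.e., a bounded linear map with δ(x·y) = δ(x)·y + x·δ(y). Then for every a ∈ A: δ(exp(a)) = (Σ_{n≥0} (ad_a)ⁿ(δ(a))/(n+1)!)·exp(a), where ad_a(x) := a·x − x·a and the series converges absolutely in norm. -/
/-!
With `L = ad a` and `k s = δ (exp (s • a)) * exp (-(s • a))`, the Leibniz rule gives the linear
equation `k' = δ a + L k` with `k 0 = 0`, so by variation of constants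
`δ (exp a) * exp (-a) = k 1 = ∫₀¹ exp (t • L) (δ a) dt`. Integrating the exponential series of
`exp (t • L)` term by term turns this integral into `∑ₙ Lⁿ (δ a) / (n + 1)!`.
-/

open NormedSpace
open scoped Nat

section BanachAlgebra

variable {𝔸 : Type*} [NormedRing 𝔸] [NormedAlgebra ℝ 𝔸]

theorem summable_norm_inv_factorial_succ_smul_pow (b : 𝔸) :
    Summable fun n : ℕ => ‖((n + 1)! : ℝ)⁻¹ • b ^ n‖ := by
  refine (norm_expSeries_summable' (𝕂 := ℝ) b).of_nonneg_of_le (fun _ => norm_nonneg _) fun n => ?_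
  rw [norm_smul, norm_smul]
  gcongr
  rw [norm_inv, norm_inv, Real.norm_natCast, Real.norm_natCast]
  gcongr
  exact n.le_succ

variable [CompleteSpace 𝔸]

theorem exp_mul_exp_neg (b : 𝔸) : exp b * exp (-b) = 1 := by
  let +nondep : NormedAlgebra ℚ 𝔸 := .restrictScalars ℚ ℝ 𝔸
  rw [← exp_add_of_commute (Commute.refl b).neg_right, add_neg_cancel, exp_zero]

theorem hasSum_integral_exp_smul (b : 𝔸) :
    HasSum (fun n : ℕ => ((n + 1)! : ℝ)⁻¹ • b ^ n) (∫ t in (0 : ℝ)..1, exp (t • b)) := by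
  have hterm : ∀ n : ℕ, ∫ t in (0 : ℝ)..1, ((n ! : ℝ)⁻¹ • (t • b) ^ n) =
      ((n + 1)! : ℝ)⁻¹ • b ^ n := by
    intro n
    simp only [smul_pow, smul_smul]
    rw [intervalIntegral.integral_smul_const, intervalIntegral.integral_const_mul, integral_pow]
    congr 1
    push_cast [Nat.factorial_succ]
    field_simp
    ring
  simp only [← hterm]
  refine intervalIntegral.hasSum_integral_of_dominated_convergence
    (fun n _ => ‖(n ! : ℝ)⁻¹ • b ^ n‖) (fun n => by fun_prop) (fun n => ?_)
    (.of_forall fun _ _ => norm_expSeries_summable' b) intervalIntegrable_const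
    (.of_forall fun t _ => exp_series_hasSum_exp' (t • b))
  refine .of_forall fun t ht => ?_
  rw [Set.uIoc_of_le zero_le_one] at ht
  rw [smul_pow, smul_comm, norm_smul (t ^ n)]
  refine mul_le_of_le_one_left (norm_nonneg _) ?_
  rw [norm_pow, Real.norm_eq_abs, abs_of_pos ht.1]
  exact pow_le_one₀ ht.1.le ht.2

end BanachAlgebra

section LinearODE

variable {E : Type*} [NormedAddCommGroup E] [NormedSpace ℝ E]

theorem summable_norm_inv_factorial_succ_smul_pow_apply (L : E →L[ℝ] E) (x : E) :
    Summable fun n : ℕ => ‖((n + 1)! : ℝ)⁻¹ • (L ^ n) x‖ := by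
  refine ((summable_norm_inv_factorial_succ_smul_pow L).mul_right ‖x‖).of_nonneg_of_le
    (fun _ => norm_nonneg _) fun n => ?_
  rw [← smul_apply]
  exact ContinuousLinearMap.le_opNorm _ x

variable [CompleteSpace E]

theorem hasSum_integral_exp_smul_apply (L : E →L[ℝ] E) (x : E) :
    HasSum (fun n : ℕ => ((n + 1)! : ℝ)⁻¹ • (L ^ n) x) (∫ t in (0 : ℝ)..1, exp (t • L) x) := by
  have hcont : Continuous fun t : ℝ => exp (t • L) :=
    (differentiable_exp_smul_const ℝ L).continuous
  have h := (hasSum_integral_exp_smul L).mapL (ContinuousLinearMap.apply ℝ E x)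
  rw [← ContinuousLinearMap.intervalIntegral_comp_comm _ (hcont.intervalIntegrable 0 1)] at h
  simpa using h

theorem eq_exp_smul_add_integral_of_hasDerivAt (L : E →L[ℝ] E) {k : ℝ → E} {x : E}
    (hk : ∀ s, HasDerivAt k (x + L (k s)) s) (t : ℝ) :
    k t = exp (t • L) (k 0) + ∫ u in (0 : ℝ)..t, exp (u • L) x := by
  have hψ : ∀ u, HasDerivAt (fun u => exp (u • L) (k (t - u))) (-exp (u • L) x) u := by
    intro u
    convert (hasDerivAt_exp_smul_const L u).clm_apply ((hk (t - u)).comp_const_sub t u) using 1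
    simp
  have hcont : Continuous fun u : ℝ => exp (u • L) x :=
    (differentiable_exp_smul_const ℝ L).continuous.clm_apply continuous_const
  have hftc := intervalIntegral.integral_eq_sub_of_hasDerivAt (fun u _ => hψ u)
    (hcont.neg.intervalIntegrable 0 t)
  simp only [intervalIntegral.integral_neg, sub_self, zero_smul, exp_zero, sub_zero,
    one_apply_eq_self] at hftc
  rw [← sub_eq_iff_eq_add', ← neg_sub, ← hftc, neg_neg]

end LinearODE

section Commutator

variable {A : Type*} [NormedRing A] [NormedAlgebra ℝ A]

noncomputable def ad (a : A) : A →L[ℝ] A :=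
  ContinuousLinearMap.mul ℝ A a - (ContinuousLinearMap.mul ℝ A).flip a

@[simp]
theorem ad_apply (a x : A) : ad a x = a * x - x * a := rfl

theorem iterate_commutator_eq_ad_pow_apply (a x : A) (n : ℕ) :
    (fun y : A => a * y - y * a)^[n] x = (ad a ^ n) x := by
  induction n with
  | zero => rfl
  | succ n ih => rw [Function.iterate_succ_apply', ih, pow_succ', mul_apply_eq_comp, ad_apply]

end Commutator

section Leibniz

variable {A : Type*} [NormedRing A] [NormedAlgebra ℝ A] [CompleteSpace A] {δ : A →L[ℝ] A}

theorem hasDerivAt_map_exp_smul_mul_exp_neg_smul (hδ : ∀ x y, δ (x * y) = δ x * y + x * δ y)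
    (a : A) (s : ℝ) :
    HasDerivAt (fun u : ℝ => δ (exp (u • a)) * exp (-(u • a)))
      (δ a + ad a (δ (exp (s • a)) * exp (-(s • a)))) s := by
  let +nondep : NormedAlgebra ℚ A := .restrictScalars ℚ ℝ A
  have hcomm : a * exp (-(s • a)) = exp (-(s • a)) * a :=
    ((Commute.refl a).smul_right s).neg_right.exp_right.eq
  have hexp := hasDerivAt_exp_smul_const' (-a) s
  simp only [smul_neg] at hexp
  have hδexp : HasDerivAt (fun u : ℝ => δ (exp (u • a))) (δ (a * exp (s • a))) s :=
    δ.hasFDerivAt.comp_hasDerivAt s (hasDerivAt_exp_smul_const' a s)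
  refine (hδexp.mul hexp).congr_deriv ?_
  rw [hδ, add_mul, mul_assoc (δ a), exp_mul_exp_neg, mul_one, ad_apply,
    mul_assoc (δ _) _ a, ← hcomm]
  noncomm_ring

theorem map_exp_mul_exp_neg_eq_integral (hδ : ∀ x y, δ (x * y) = δ x * y + x * δ y) (a : A) :
    δ (exp a) * exp (-a) = ∫ t in (0 : ℝ)..1, exp (t • ad a) (δ a) := by
  have hδ1 : δ 1 = 0 := by simpa using hδ 1 1
  simpa [hδ1] using
    eq_exp_smul_add_integral_of_hasDerivAt (ad a) (hasDerivAt_map_exp_smul_mul_exp_neg_smul hδ a) 1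

end Leibniz

/-- Duhamel–Schur: for a bounded derivation `δ` on a unital Banach algebra,
`δ(exp(a)) = (Σ_{n≥0} (ad_a)ⁿ(δ(a))/(n+1)!)·exp(a)`, with absolute norm convergence. -/
theorem stmt4 (A : Type*) [NormedRing A] [NormedAlgebra ℝ A] [CompleteSpace A]
    (δ : A →L[ℝ] A) (hδ : ∀ x y : A, δ (x * y) = δ x * y + x * δ y)
    (a : A) :
    (Summable fun n : ℕ =>
      ‖((n + 1).factorial : ℝ)⁻¹ • (fun x : A => a * x - x * a)^[n] (δ a)‖) ∧
    δ (NormedSpace.exp a) =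
      (∑' n : ℕ, ((n + 1).factorial : ℝ)⁻¹ • (fun x : A => a * x - x * a)^[n] (δ a)) *
        NormedSpace.exp a := by
  have hexp : exp (-a) * exp a = 1 := by simpa using exp_mul_exp_neg (-a)
  simp only [iterate_commutator_eq_ad_pow_apply]
  refine ⟨summable_norm_inv_factorial_succ_smul_pow_apply (ad a) (δ a), ?_⟩
  rw [(hasSum_integral_exp_smul_apply (ad a) (δ a)).tsum_eq, ← map_exp_mul_exp_neg_eq_integral hδ,
    mul_assoc, hexp, mul_one]
end

section
/- Let A be a unital Banach algebra, D : A → A a bounded derivation (a bounded linear map with D(x·y) = D(x)·y + x·D(y)), and b ∈ A. Let R_b : A → A be right multiplication, R_b(x) := x·b, and set W_t := exp(t(D + R_b))(1), the exponential of the bounded operator t(D + R_b) applied to the unit 1. Then for every t ∈ ℝ and every x ∈ A: exp(t(D + R_b))(x) = exp(tD)(x)·W_t. -/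
/-!
If `L (u * w) = D u * w + u * L w` (as holds for `L = D + R_b` with `D` a derivation), then
`s ↦ exp (s D) u * exp (s L) w` solves the linear equation `g' = L g` with `g 0 = u * w`, by the
product rule. A solution of `g' = T g` is `exp (s T) (g 0)`, since `s ↦ exp (-s T) (g s)` has
zero derivative.
-/

open NormedSpace

theorem exp_smul_mul_exp_smul_neg {𝕂 𝔸 : Type*} [RCLike 𝕂] [NormedRing 𝔸] [NormedAlgebra 𝕂 𝔸]
    [CompleteSpace 𝔸] (x : 𝔸) (t : 𝕂) : exp (t • x) * exp (t • -x) = 1 := by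
  have hball : ∀ y : 𝔸, y ∈ Metric.eball (0 : 𝔸) (expSeries 𝕂 𝔸).radius :=
    fun y => (expSeries_radius_eq_top 𝕂 𝔸).symm ▸ edist_lt_top _ _
  rw [smul_neg, ← exp_add_of_commute_of_mem_ball (Commute.neg_right (Commute.refl _))
    (hball _) (hball _), add_neg_cancel, exp_zero]

section LinearODE

variable {𝕂 E : Type*} [RCLike 𝕂] [NormedAddCommGroup E] [NormedSpace 𝕂 E] [CompleteSpace E]

theorem hasDerivAt_exp_smul_apply (T : E →L[𝕂] E) (x : E) (s : 𝕂) :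
    HasDerivAt (fun s => exp (s • T) x) (T (exp (s • T) x)) s :=
  (hasDerivAt_exp_smul_const' T s).clm_apply (hasDerivAt_const s x)
    |>.congr_deriv (by simp [mul_apply_eq_comp])

theorem eq_exp_smul_apply_of_hasDerivAt (T : E →L[𝕂] E) {g : 𝕂 → E}
    (hg : ∀ s, HasDerivAt g (T (g s)) s) (t : 𝕂) :
    g t = exp (t • T) (g 0) := by
  have hderiv : ∀ s, HasDerivAt (fun s => exp (s • -T) (g s)) 0 s := fun s => by
    convert (hasDerivAt_exp_smul_const' (-T) s).clm_apply (hg s) using 1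
    have hcomm : Commute (-T) (exp (s • -T)) := ((Commute.refl (-T)).smul_right s).exp_right
    rw [hcomm.eq]
    simp
  have hconst : exp (t • -T) (g t) = g 0 := by
    simpa using is_const_of_deriv_eq_zero (fun s => (hderiv s).differentiableAt)
      (fun s => (hderiv s).deriv) t 0
  calc g t = (exp (t • T) * exp (t • -T)) (g t) := by rw [exp_smul_mul_exp_smul_neg T t]; rfl
    _ = exp (t • T) (g 0) := by rw [mul_apply_eq_comp, hconst]

end LinearODE

theorem exp_smul_apply_mul_of_map_mul {𝕂 A : Type*} [RCLike 𝕂] [NormedRing A]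
    [NormedAlgebra 𝕂 A] [CompleteSpace A] (D L : A →L[𝕂] A)
    (hL : ∀ u w, L (u * w) = D u * w + u * L w) (t : 𝕂) (u w : A) :
    exp (t • L) (u * w) = exp (t • D) u * exp (t • L) w := by
  have hg : ∀ s, HasDerivAt (fun s => exp (s • D) u * exp (s • L) w)
      (L (exp (s • D) u * exp (s • L) w)) s := fun s => by
    rw [hL]
    exact (hasDerivAt_exp_smul_apply D u s).mul (hasDerivAt_exp_smul_apply L w s)
  have hsol := (eq_exp_smul_apply_of_hasDerivAt L hg t).symm
  rwa [zero_smul 𝕂 D, zero_smul 𝕂 L, exp_zero] at hsol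

/-- dressing cocycle intertwines flows: for a bounded derivation `D` and
right multiplication `R_b`, with `W_t := exp(t(D+R_b))(1)`, one has
`exp(t(D+R_b))(x) = exp(tD)(x)·W_t`. -/
theorem stmt6 (A : Type*) [NormedRing A] [NormedAlgebra ℝ A] [CompleteSpace A]
    (D : A →L[ℝ] A) (hD : ∀ x y : A, D (x * y) = D x * y + x * D y)
    (b : A) (Rb : A →L[ℝ] A) (hRb : ∀ x : A, Rb x = x * b)
    (t : ℝ) (x : A) :
    NormedSpace.exp (t • (D + Rb)) x =
      NormedSpace.exp (t • D) x * NormedSpace.exp (t • (D + Rb)) 1 := by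
  have hL : ∀ u w, (D + Rb) (u * w) = D u * w + u * (D + Rb) w := fun u w => by
    simp only [add_apply, hD, hRb, mul_add, mul_assoc, add_assoc]
  simpa using exp_smul_apply_mul_of_map_mul D (D + Rb) hL t x 1
end

section
/- Let A be a unital Banach algebra, D : A → A a bounded derivation (a bounded linear map with D(x·y) = D(x)·y + x·D(y)), and b ∈ A. Let R_b : A → A be right multiplication, R_b(x) := x·b, and set W_t := exp(t(D + R_b))(1), the exponential of the bounded operator t(D + R_b) applied to the unit 1. Then the cocycle relation W_{s+t} = exp(tD)(W_s)·W_t holds for all s, t ∈ ℝ. -/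
/-!
Both sides of the cocycle relation, as functions of `t`, solve the linear ODE `y' = (D + R_b) y`
with the value `W_s` at `t = 0`: the left side because `W` does, the right side because the
Leibniz rule gives `(D + R_b)(x y) = D x · y + x · (D + R_b) y`. Since `D + R_b` is Lipschitz,
solutions of this ODE are determined by their initial value.
-/

open NormedSpace

theorem eq_of_hasDerivAt_clm_apply {E : Type*} [NormedAddCommGroup E] [NormedSpace ℝ E]
    (L : E →L[ℝ] E) {f g : ℝ → E} (hf : ∀ t, HasDerivAt f (L (f t)) t)
    (hg : ∀ t, HasDerivAt g (L (g t)) t) {t₀ : ℝ} (h : f t₀ = g t₀) : f = g :=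
  ODE_solution_unique_univ (v := fun _ => L) (s := fun _ => Set.univ)
    (fun _ => L.lipschitz.lipschitzOnWith) (fun t => ⟨hf t, trivial⟩)
    (fun t => ⟨hg t, trivial⟩) h

theorem hasDerivAt_exp_smul_apply_s7 {E : Type*} [NormedAddCommGroup E] [NormedSpace ℝ E]
    [CompleteSpace E] (L : E →L[ℝ] E) (x : E) (t : ℝ) :
    HasDerivAt (fun u : ℝ => exp (u • L) x) (L (exp (t • L) x)) t := by
  simpa using (hasDerivAt_exp_smul_const' L t).clm_apply (hasDerivAt_const t x)

theorem HasDerivAt.mul_of_derivation {A : Type*} [NormedRing A] [NormedAlgebra ℝ A]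
    {D Rb : A →L[ℝ] A} {b : A} (hD : ∀ x y : A, D (x * y) = D x * y + x * D y)
    (hRb : ∀ x : A, Rb x = x * b) {y z : ℝ → A} {t : ℝ} (hy : HasDerivAt y (D (y t)) t)
    (hz : HasDerivAt z ((D + Rb) (z t)) t) :
    HasDerivAt (fun u => y u * z u) ((D + Rb) (y t * z t)) t := by
  refine (hy.mul hz).congr_deriv ?_
  rw [add_apply, add_apply, hRb, hRb, hD, mul_add, mul_assoc, add_assoc]

/-- cocycle relation: with `W_t := exp(t(D+R_b))(1)` for a bounded
derivation `D` and right multiplication `R_b`, one has `W_{s+t} = exp(tD)(W_s)·W_t`. -/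
theorem stmt7 (A : Type*) [NormedRing A] [NormedAlgebra ℝ A] [CompleteSpace A]
    (D : A →L[ℝ] A) (hD : ∀ x y : A, D (x * y) = D x * y + x * D y)
    (b : A) (Rb : A →L[ℝ] A) (hRb : ∀ x : A, Rb x = x * b)
    (W : ℝ → A) (hW : ∀ t : ℝ, W t = NormedSpace.exp (t • (D + Rb)) 1)
    (s t : ℝ) :
    W (s + t) = NormedSpace.exp (t • D) (W s) * W t := by
  have hW_deriv : ∀ u, HasDerivAt W ((D + Rb) (W u)) u := fun u => by
    simpa only [← funext hW, ← hW u] using hasDerivAt_exp_smul_apply_s7 (D + Rb) 1 u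
  have hW_zero : W 0 = 1 := by rw [hW, zero_smul ℝ (D + Rb), exp_zero, one_apply_eq_self]
  have h_eq : (fun u => W (s + u)) = fun u => exp (u • D) (W s) * W u :=
    eq_of_hasDerivAt_clm_apply (D + Rb) (fun u => (hW_deriv (s + u)).comp_const_add s u)
      (fun u => (hasDerivAt_exp_smul_apply_s7 D (W s) u).mul_of_derivation hD hRb (hW_deriv u))
      (t₀ := 0) (by rw [add_zero, hW_zero, mul_one, zero_smul ℝ D, exp_zero, one_apply_eq_self])
  exact congrFun h_eq t
end

section
/- Let F_{μν} : ℝ⁴ → ℝ (0 ≤ μ,ν ≤ 3) be Schwartz functions satisfying antisymmetry F_{μν} = −F_{νμ}. Let e ∈ ℝ⁴, e ≠ 0, and define A_μ(x) := ∫₀^∞ Σ_{ν=0}^{3} F_{μν}(x + se)·e^ν ds. Let ε₀ = 1 and ε₁ = ε₂ = ε₃ = −1. Then: (a) Σ_{μ=0}^{3} e^μ·A_μ(x) = 0 for all x (axiality); and (b) if Σ_{μ=0}^{3} ε_μ·∂_μF_{μν}(x) = 0 for all ν and all x, then Σ_{μ=0}^{3} ε_μ·∂_μA_μ(x) = 0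 for all x (transversality). -/
/-!
Write `A_μ = Σ_ν e^ν I_e F_{μν}` with `I_e f (x) = ∫₀^∞ f (x + s e) ds`. Axiality is then the
vanishing at `e` of the quadratic form of the antisymmetric matrix `I_e F_{μν} (x)`. For
transversality, Schwartz decay gives `‖f (y + s e)‖ ≲ (1 + |s|)⁻²` uniformly for `y` in a
ball, so `I_e` commutes with derivatives and finite linear combinations, and
`Σ_μ ε_μ ∂_μ A_μ = Σ_ν e^ν I_e (Σ_μ ε_μ ∂_μ F_{μν}) = 0` by the Maxwell equation.
-/

open MeasureTheory Set

open scoped SchwartzMap LineDeriv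

section RayIntegral

variable {E V : Type*} [NormedAddCommGroup E] [NormedSpace ℝ E] [NormedAddCommGroup V]

theorem one_add_abs_le_mul_one_add_norm_add_smul {e y : E} (he : e ≠ 0) {R : ℝ} (hy : ‖y‖ ≤ R)
    (s : ℝ) : 1 + |s| ≤ (‖e‖ + R + 1) / ‖e‖ * (1 + ‖y + s • e‖) := by
  have he' : 0 < ‖e‖ := norm_pos_iff.mpr he
  have hR : 0 ≤ R := (norm_nonneg y).trans hy
  have hse : |s| * ‖e‖ ≤ ‖y + s • e‖ + R := by
    rw [← Real.norm_eq_abs, ← norm_smul]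
    calc ‖s • e‖ = ‖(y + s • e) - y‖ := by rw [add_sub_cancel_left]
      _ ≤ ‖y + s • e‖ + ‖y‖ := norm_sub_le _ _
      _ ≤ ‖y + s • e‖ + R := by gcongr
  rw [div_mul_eq_mul_div, le_div_iff₀ he']
  nlinarith [norm_nonneg (y + s • e)]

theorem norm_comp_add_smul_le {h : E → V} {C : ℝ} (hC : ∀ z, (1 + ‖z‖) ^ 2 * ‖h z‖ ≤ C)
    {e y : E} (he : e ≠ 0) {R : ℝ} (hy : ‖y‖ ≤ R) (s : ℝ) :
    ‖h (y + s • e)‖ ≤ C * ((‖e‖ + R + 1) / ‖e‖) ^ 2 * ((1 + |s|) ^ 2)⁻¹ := by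
  set K := (‖e‖ + R + 1) / ‖e‖
  set z := y + s • e
  rw [le_mul_inv_iff₀ (by positivity)]
  calc ‖h z‖ * (1 + |s|) ^ 2 ≤ ‖h z‖ * (K * (1 + ‖z‖)) ^ 2 := by
        gcongr; exact one_add_abs_le_mul_one_add_norm_add_smul he hy s
    _ = K ^ 2 * ((1 + ‖z‖) ^ 2 * ‖h z‖) := by ring
    _ ≤ K ^ 2 * C := by gcongr; exact hC z
    _ = C * K ^ 2 := mul_comm _ _

variable [NormedSpace ℝ V]

/-- The string integral `I_e` of the paper, for the sharp string `ℝ₊ e`. -/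
noncomputable def rayIntegral (e : E) (f : E → V) (x : E) : V :=
  ∫ s in Ioi (0 : ℝ), f (x + s • e)

theorem integrable_inv_one_add_abs_sq : Integrable fun s : ℝ => ((1 + |s|) ^ 2)⁻¹ := by
  refine (integrable_one_add_norm (E := ℝ) (μ := volume) (r := 2) (by norm_num)).congr
    (.of_forall fun s => ?_)
  dsimp only
  rw [Real.norm_eq_abs, Real.rpow_neg (by positivity), Real.rpow_two]

theorem SchwartzMap.exists_one_add_norm_sq_mul_le (f : 𝓢(E, V)) :
    ∃ C, ∀ z, (1 + ‖z‖) ^ 2 * ‖f z‖ ≤ C :=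
  ⟨_, fun z => by
    simpa using one_add_le_sup_seminorm_apply (𝕜 := ℝ) (m := (2, 0)) le_rfl le_rfl f z⟩

theorem SchwartzMap.integrable_comp_add_smul (f : 𝓢(E, V)) {e : E} (he : e ≠ 0) (y : E) :
    Integrable fun s : ℝ => f (y + s • e) := by
  obtain ⟨C, hC⟩ := f.exists_one_add_norm_sq_mul_le
  exact (integrable_inv_one_add_abs_sq.const_mul _).mono'
    (f.continuous.comp (by fun_prop)).aestronglyMeasurable
    (.of_forall (norm_comp_add_smul_le hC he le_rfl))

theorem SchwartzMap.rayIntegral_sum {ι : Type*} (s : Finset ι) (c : ι → ℝ) (f : ι → 𝓢(E, V))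
    {e : E} (he : e ≠ 0) (x : E) :
    rayIntegral e (fun z => ∑ i ∈ s, c i • f i z) x = ∑ i ∈ s, c i • rayIntegral e (f i) x := by
  simp only [rayIntegral]
  rw [integral_finsetSum _ fun i _ => ((f i).integrable_comp_add_smul he x).integrableOn.fun_smul _]
  simp only [integral_smul]

theorem SchwartzMap.hasFDerivAt_rayIntegral (f : 𝓢(E, V)) {e : E} (he : e ≠ 0) (x : E) :
    HasFDerivAt (rayIntegral e f) (∫ s in Ioi (0 : ℝ), fderiv ℝ f (x + s • e)) x := by
  obtain ⟨C, hC⟩ := (fderivCLM ℝ E V f).exists_one_add_norm_sq_mul_le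
  simp only [fderivCLM_apply] at hC
  refine hasFDerivAt_integral_of_dominated_of_fderiv_le (F := fun y s => f (y + s • e))
    (F' := fun y s => fderiv ℝ f (y + s • e))
    (Metric.ball_mem_nhds x one_pos)
    (.of_forall fun y => (f.continuous.comp (by fun_prop)).aestronglyMeasurable)
    (f.integrable_comp_add_smul he x).integrableOn
    ((fderivCLM ℝ E V f).continuous.comp (by fun_prop)).aestronglyMeasurable
    (.of_forall fun s y hy => norm_comp_add_smul_le hC he (R := ‖x‖ + 1) ?_ s)
    (integrable_inv_one_add_abs_sq.const_mul _).integrableOn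
    (.of_forall fun s y _ => ?_)
  · rw [Metric.mem_ball, dist_eq_norm] at hy
    linarith [norm_le_norm_add_norm_sub' y x]
  · exact (f.hasFDerivAt (y + s • e)).comp y ((hasFDerivAt_id y).add_const (s • e))

theorem SchwartzMap.fderiv_rayIntegral_apply (f : 𝓢(E, V)) {e : E} (he : e ≠ 0) (x v : E) :
    fderiv ℝ (rayIntegral e f) x v = rayIntegral e (fun z => fderiv ℝ f z v) x := by
  have hint := ((fderivCLM ℝ E V f).integrable_comp_add_smul he x).integrableOn (s := Ioi 0)
  simp only [fderivCLM_apply] at hint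
  rw [(f.hasFDerivAt_rayIntegral he x).fderiv, ContinuousLinearMap.integral_apply hint]
  rfl

theorem SchwartzMap.fderiv_sum_smul_rayIntegral_apply {ι : Type*} (s : Finset ι) (c : ι → ℝ)
    (f : ι → 𝓢(E, V)) {e : E} (he : e ≠ 0) (x v : E) :
    fderiv ℝ (fun y => ∑ i ∈ s, c i • rayIntegral e (f i) y) x v
      = ∑ i ∈ s, c i • rayIntegral e (fun z => fderiv ℝ (f i) z v) x := by
  have hdiff i := ((f i).hasFDerivAt_rayIntegral he x).differentiableAt
  rw [fderiv_fun_sum fun i _ => (hdiff i).fun_const_smul (c i)]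
  simp only [sum_apply, fderiv_fun_const_smul (hdiff _), smul_apply,
    (f _).fderiv_rayIntegral_apply he]

end RayIntegral

theorem Finset.sum_mul_sum_mul_eq_zero_of_antisymm {ι R : Type*} [Fintype ι] [CommRing R]
    [IsAddTorsionFree R] (a : ι → R) {M : ι → ι → R} (hM : ∀ i j, M i j = -M j i) :
    ∑ i, a i * ∑ j, a j * M i j = 0 := by
  rw [← self_eq_neg]
  calc ∑ i, a i * ∑ j, a j * M i j = ∑ i, ∑ j, a i * (a j * M i j) := by
        simp only [Finset.mul_sum]
    _ = ∑ j, ∑ i, a i * (a j * M i j) := Finset.sum_comm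
    _ = -∑ j, a j * ∑ i, a i * M j i := by
        simp only [Finset.mul_sum, ← Finset.sum_neg_distrib]
        refine Finset.sum_congr rfl fun j _ => Finset.sum_congr rfl fun i _ => ?_
        rw [hM]
        ring

theorem stmt16_general
    (F : Fin 4 → Fin 4 → SchwartzMap (Fin 4 → ℝ) ℝ)
    (hanti : ∀ (μ ν : Fin 4) (x : Fin 4 → ℝ), F μ ν x = -(F ν μ x))
    (e : Fin 4 → ℝ) (he : e ≠ 0)
    (A : Fin 4 → (Fin 4 → ℝ) → ℝ)
    (hA : ∀ (μ : Fin 4) (x : Fin 4 → ℝ),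
      A μ x = ∫ s in Set.Ioi (0:ℝ), ∑ ν : Fin 4, F μ ν (x + s • e) * e ν)
    (ε : Fin 4 → ℝ) :
    (∀ x : Fin 4 → ℝ, ∑ μ : Fin 4, e μ * A μ x = 0) ∧
    ((∀ (ν : Fin 4) (x : Fin 4 → ℝ),
        ∑ μ : Fin 4, ε μ * fderiv ℝ (fun y => F μ ν y) x (Pi.single μ 1) = 0) →
      ∀ x : Fin 4 → ℝ,
        ∑ μ : Fin 4, ε μ * fderiv ℝ (A μ) x (Pi.single μ 1) = 0) := by
  have hA' : ∀ μ, A μ = fun x => ∑ ν, e ν • rayIntegral e (F μ ν) x := by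
    intro μ
    funext x
    rw [hA, ← SchwartzMap.rayIntegral_sum .univ e (F μ) he x]
    simp only [rayIntegral, smul_eq_mul, mul_comm]
  refine ⟨fun x => ?_, fun hM x => ?_⟩
  · simp only [hA', smul_eq_mul]
    refine Finset.sum_mul_sum_mul_eq_zero_of_antisymm e fun μ ν => ?_
    simp only [rayIntegral, hanti μ ν, integral_neg]
  · calc ∑ μ, ε μ * fderiv ℝ (A μ) x (Pi.single μ 1)
        = ∑ ν, e ν * ∑ μ, ε μ * rayIntegral e (fun z => fderiv ℝ (F μ ν) z (Pi.single μ 1)) x := by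
          simp only [hA', SchwartzMap.fderiv_sum_smul_rayIntegral_apply _ _ _ he]
          simp only [smul_eq_mul, Finset.mul_sum, mul_left_comm (ε _)]
          exact Finset.sum_comm
      _ = ∑ ν, e ν * rayIntegral e
            (fun z => ∑ μ, ε μ * fderiv ℝ (F μ ν) z (Pi.single μ 1)) x := by
          refine Finset.sum_congr rfl fun ν _ => congrArg _ ?_
          -- `∂_{v} f z` unfolds to `fderiv ℝ f z v`, so `h` matches the goal up to `rfl`.
          have h := SchwartzMap.rayIntegral_sum .univ ε
            (fun μ => ∂_{(Pi.single μ 1 : Fin 4 → ℝ)} (F μ ν)) he x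
          simp only [smul_eq_mul] at h
          exact h.symm
      _ = 0 := by simp [rayIntegral, hM]

/-- for an antisymmetric Schwartz field strength, the string-integrated
potential `A_μ(x) = ∫₀^∞ Σ_ν F_{μν}(x+se) e^ν ds` is (a) axial: `Σ_μ e^μ A_μ = 0`, and
(b) transversal, `Σ_μ ε_μ ∂_μA_μ = 0`, provided `Σ_μ ε_μ ∂_μF_{μν} = 0` for all `ν`
(with Minkowski signs `ε₀ = 1`, `ε₁ = ε₂ = ε₃ = −1`). -/
theorem stmt16
    (F : Fin 4 → Fin 4 → SchwartzMap (Fin 4 → ℝ) ℝ)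
    (hanti : ∀ (μ ν : Fin 4) (x : Fin 4 → ℝ), F μ ν x = -(F ν μ x))
    (e : Fin 4 → ℝ) (he : e ≠ 0)
    (A : Fin 4 → (Fin 4 → ℝ) → ℝ)
    (hA : ∀ (μ : Fin 4) (x : Fin 4 → ℝ),
      A μ x = ∫ s in Set.Ioi (0:ℝ), ∑ ν : Fin 4, F μ ν (x + s • e) * e ν)
    (ε : Fin 4 → ℝ) (hε : ∀ μ : Fin 4, ε μ = if μ = 0 then 1 else -1) :
    (∀ x : Fin 4 → ℝ, ∑ μ : Fin 4, e μ * A μ x = 0) ∧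
    ((∀ (ν : Fin 4) (x : Fin 4 → ℝ),
        ∑ μ : Fin 4, ε μ * fderiv ℝ (fun y => F μ ν y) x (Pi.single μ 1) = 0) →
      ∀ x : Fin 4 → ℝ,
        ∑ μ : Fin 4, ε μ * fderiv ℝ (A μ) x (Pi.single μ 1) = 0) :=
  stmt16_general F hanti e he A hA ε
end
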